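/- arXiv:2603.23827 — 3 statements merged into one kernel-verified Lean document; each statement's English description precedes it below -/
import Mathlib

section
/- Define ‖·‖ on monomials of 𝒟^∞W̃_q by ‖c_{i,(l)}‖ = max{i − l, 0}, ‖h_{i,(0)}‖ = 0, ‖h_{i,(l)}‖ = max{i − l, 0} for l ≥ 1, extended additively over products. Then the derivation K = Σ K_i satisfies ‖K(φ)‖ ≥ ‖φ‖ − 1 for every monomial φ (whenever K(φ) ≠ 0, each monomial appearing in K(φ) has ‖·‖ ≥ ‖φ‖ − 1). -/
/-- The norm `‖·‖` of a generator of `𝒟^∞W̃_q`: a generator is encoded as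
`(b, i, l) : Bool × Fin q × ℕ`, where `b = true` means `c_{i+1,(l)}` and `b = false` means
`h_{i+1,(l)}` (the paper's indices run from `1` to `q`).  By definition
`‖c_{i,(l)}‖ = max{i − l, 0}`, `‖h_{i,(0)}‖ = 0` and `‖h_{i,(l)}‖ = max{i − l, 0}` for
`l ≥ 1` (truncated subtraction on `ℕ` realizes the `max` with `0`). -/
def nrm (q : ℕ) : Bool × Fin q × ℕ → ℕ :=
  fun x => if x.1 = false ∧ x.2.2 = 0 then 0 else ((x.2.1 : ℕ) + 1) - x.2.2

theorem nrm_c_le_nrm_h_succ_add_one (q : ℕ) (j : Fin q) (l : ℕ) :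
    nrm q (true, j, l) ≤ nrm q (false, j, l + 1) + 1 := by
  simp only [nrm, Bool.true_eq_false, false_and, ite_false, Nat.add_one_ne_zero, and_false]
  omega

/-- A monomial is modelled by the list of its factors; a monomial of `K(φ)` arises from `φ` by
replacing one factor `c_{j,(l)}` by `h_{j,(l+1)}`, so only that factor's norm changes. -/
theorem stmt8 (q : ℕ) (L₁ L₂ : List (Bool × Fin q × ℕ)) (j : Fin q) (l : ℕ) :
    ((L₁ ++ [(true, j, l)] ++ L₂).map (nrm q)).sum
      ≤ ((L₁ ++ [(false, j, l + 1)] ++ L₂).map (nrm q)).sum + 1 := by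
  simp only [List.map_append, List.sum_append, List.map_singleton, List.sum_singleton]
  have hfactor := nrm_c_le_nrm_h_succ_add_one q j l
  omega
end

section
/- Let V = ⊕_{k≥0} V^k with linear maps δ: V^k → V^{k+1}, σ: V^k → V^{k−1} satisfying σδ − δσ = k·id on V^k and σ = 0 on V^0 and V^1. Set λ_{m,k} = ½(m−1)(2k−m). Then V^0 is the 0-eigenspace of δσ, and for each k ≥ 1, V^k decomposes as the direct sum ⊕_{m=1}^k F_{λ_{m,k},k}, where F_{λ,k} is the λ-eigenspace of δ∘σ on V^k. Moreover δ is injective on ⊕_{k≥1} V^k. -/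
/-!
Induction on the degree. If `V^k` is spanned by `δσ`-eigenvectors `u` with eigenvalues
`λ_{m,k}`, the commutator identity makes `δu` an eigenvector with eigenvalue
`λ_{m,k} + k = λ_{m+1,k+1} > 0`. Hence for `x ∈ V^{k+1}`, `δσ x ∈ δ(V^k)` equals `δσ y` for some
`y` in the span of the `F_{λ_{m+1,k+1},k+1}`, and `x - y` lies in `ker δσ ∩ V^{k+1}`, which is
`F_{λ_{1,k+1},k+1}`. The eigenvalues `λ_{m,k}`, `1 ≤ m ≤ k`, are distinct, whence the independence.
If `x ∈ V^k`, `k ≥ 1`, and `δx = 0`, then `δσ x = -k x` with `-k < 0 ≤ λ_{m,k}`, so `x = 0`;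
as `δ` raises the degree, this extends to the sum of the `V^k`.
-/

/-- `λ_{m,k} = ½(m−1)(2k−m)`. -/
noncomputable def lam (m k : ℕ) : ℝ := ((m : ℝ) - 1) * (2 * (k : ℝ) - (m : ℝ)) / 2

open Module End

lemma lam_one_left (k : ℕ) : lam 1 k = 0 := by
  simp [lam]

lemma lam_succ_succ (m k : ℕ) : lam (m + 1) (k + 1) = lam m k + k := by
  unfold lam; push_cast; ring

lemma lam_pos {m k : ℕ} (h1 : 2 ≤ m) (h2 : m < 2 * k) : 0 < lam m k := by
  unfold lam
  have a1 : (2 : ℝ) ≤ m := by exact_mod_cast h1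
  have a2 : (m : ℝ) < 2 * k := by exact_mod_cast h2
  nlinarith

lemma lam_nonneg {m k : ℕ} (h1 : 1 ≤ m) (h2 : m ≤ 2 * k) : 0 ≤ lam m k := by
  unfold lam
  have a1 : (1 : ℝ) ≤ m := by exact_mod_cast h1
  have a2 : (m : ℝ) ≤ 2 * k := by exact_mod_cast h2
  nlinarith

lemma lam_strictMonoOn (k : ℕ) : StrictMonoOn (fun m => lam m k) (Set.Icc 1 k) := by
  rintro m ⟨hm, -⟩ m' ⟨-, hm'⟩ hlt
  unfold lam
  have a1 : (1 : ℝ) ≤ m := by exact_mod_cast hm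
  have a2 : (m : ℝ) + 1 ≤ m' := by exact_mod_cast hlt
  have a3 : (m' : ℝ) ≤ k := by exact_mod_cast hm'
  nlinarith

lemma Submodule.eq_zero_of_mem_iSup_of_map_eq_zero {R M N ι : Type*} [Ring R]
    [AddCommGroup M] [Module R M] [AddCommGroup N] [Module R N]
    {p : ι → Submodule R M} {q : ι → Submodule R N} (hq : iSupIndep q) {f : M →ₗ[R] N}
    (hf : ∀ i, ∀ x ∈ p i, f x ∈ q i) (hker : ∀ i, ∀ x ∈ p i, f x = 0 → x = 0)
    {x : M} (hx : x ∈ ⨆ i, p i) (hfx : f x = 0) : x = 0 := by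
  obtain ⟨g, hg, rfl⟩ := (Submodule.mem_iSup_iff_exists_finsupp p x).mp hx
  rw [Finsupp.sum, map_sum] at hfx
  have hfg := (iSupIndep_iff_finsetSum_eq_zero_imp_eq_zero q).mp hq g.support (fun i => f (g i))
    (fun i _ => hf i _ (hg i)) hfx
  exact Finset.sum_eq_zero fun i hi => hker i _ (hg i) (hfg i hi)

lemma Module.End.apply_mem_eigenspace_comp_add {R M : Type*} [CommRing R] [AddCommGroup M]
    [Module R M] {δ σ : M →ₗ[R] M} {c μ : R} {u : M} (hcomm : σ (δ u) - δ (σ u) = c • u)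
    (hu : u ∈ eigenspace (δ ∘ₗ σ) μ) : δ u ∈ eigenspace (δ ∘ₗ σ) (μ + c) := by
  rw [mem_eigenspace_iff] at hu ⊢
  change δ (σ u) = μ • u at hu
  change δ (σ (δ u)) = (μ + c) • δ u
  rw [sub_eq_iff_eq_add'.mp hcomm, hu, ← add_smul, map_smul]

section Grading

variable {M : Type*} [AddCommGroup M] [Module ℝ M] {V : ℕ → Submodule ℝ M}

/-- The span `⊕_{m=1}^k F_{λ_{m,k},k}` of the paper, for `f = δσ`. -/
noncomputable def lamEigenSpan (V : ℕ → Submodule ℝ M) (f : End ℝ M) (k : ℕ) : Submodule ℝ M :=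
  ⨆ m ∈ Finset.Icc 1 k, V k ⊓ f.eigenspace (lam m k)

lemma inf_eigenspace_le_lamEigenSpan (f : End ℝ M) {m k : ℕ} (hm : m ∈ Finset.Icc 1 k) :
    V k ⊓ f.eigenspace (lam m k) ≤ lamEigenSpan V f k :=
  le_iSup₂ (f := fun m (_ : m ∈ Finset.Icc 1 k) => V k ⊓ f.eigenspace (lam m k)) m hm

lemma lamEigenSpan_le (f : End ℝ M) (k : ℕ) : lamEigenSpan V f k ≤ V k :=
  iSup₂_le fun _ _ => inf_le_left

lemma iSupIndep_inf_eigenspace_lam (f : End ℝ M) (k : ℕ) :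
    iSupIndep fun m : Finset.Icc 1 k => V k ⊓ f.eigenspace (lam m k) := by
  have hinj : Function.Injective fun m : Finset.Icc 1 k => lam m k := fun a b hab =>
    Subtype.ext <| (lam_strictMonoOn k).injOn (Finset.mem_Icc.mp a.2) (Finset.mem_Icc.mp b.2) hab
  exact ((eigenspaces_iSupIndep f).comp hinj).mono fun _ => inf_le_right

lemma disjoint_lamEigenSpan_eigenspace (f : End ℝ M) (k : ℕ) {μ : ℝ} (hμ : μ < 0) :
    Disjoint (lamEigenSpan V f k) (f.eigenspace μ) := by
  refine (eigenspaces_iSupIndep f μ).symm.mono_left (iSup₂_le fun m hm => inf_le_right.trans ?_)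
  obtain ⟨h1, h2⟩ := Finset.mem_Icc.mp hm
  exact le_iSup₂ (f := fun ν (_ : ν ≠ μ) => f.eigenspace ν) (lam m k)
    ((lam_nonneg h1 (by omega)).trans_lt' hμ).ne'

variable {δ σ : M →ₗ[ℝ] M}
  (hδ : ∀ k, ∀ x ∈ V k, δ x ∈ V (k + 1))
  (hcomm : ∀ k, ∀ x ∈ V k, σ (δ x) - δ (σ x) = (k : ℝ) • x)
include hδ hcomm

lemma map_lamEigenSpan_le (k : ℕ) :
    (lamEigenSpan V (δ ∘ₗ σ) (k + 1)).map δ ≤ (lamEigenSpan V (δ ∘ₗ σ) (k + 2)).map (δ ∘ₗ σ) := by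
  refine Submodule.map_le_iff_le_comap.mpr (iSup₂_le fun m hm => ?_)
  rintro w ⟨hwV, hwE⟩
  obtain ⟨h1, h2⟩ := Finset.mem_Icc.mp hm
  have hpos : 0 < lam (m + 1) (k + 2) := lam_pos (by omega) (by omega)
  have hδw : δ w ∈ V (k + 2) ⊓ eigenspace (δ ∘ₗ σ) (lam (m + 1) (k + 2)) := by
    refine Submodule.mem_inf.mpr ⟨hδ _ w hwV, ?_⟩
    rw [lam_succ_succ]
    exact apply_mem_eigenspace_comp_add (hcomm _ w hwV) hwE
  refine ⟨(lam (m + 1) (k + 2))⁻¹ • δ w, ?_, ?_⟩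
  · exact inf_eigenspace_le_lamEigenSpan _ (Finset.mem_Icc.mpr ⟨by omega, by omega⟩)
      (Submodule.smul_mem _ _ hδw)
  · rw [map_smul, mem_eigenspace_iff.mp hδw.2, inv_smul_smul₀ hpos.ne']

lemma le_lamEigenSpan (hσ : ∀ k, ∀ x ∈ V k, σ x ∈ V (k - 1)) (hσ1 : ∀ x ∈ V 1, σ x = 0)
    (k : ℕ) : V (k + 1) ≤ lamEigenSpan V (δ ∘ₗ σ) (k + 1) := by
  induction k with
  | zero =>
    intro x hx
    refine inf_eigenspace_le_lamEigenSpan _ (Finset.mem_Icc.mpr ⟨le_rfl, le_rfl⟩)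
      (Submodule.mem_inf.mpr ⟨hx, ?_⟩)
    rw [mem_eigenspace_iff, lam_one_left, zero_smul, LinearMap.comp_apply, hσ1 x hx, map_zero]
  | succ k ih =>
    intro x hx
    have hσx : σ x ∈ V (k + 1) := hσ (k + 2) x hx
    obtain ⟨y, hy, hyx⟩ := map_lamEigenSpan_le hδ hcomm k (Submodule.mem_map_of_mem (ih hσx))
    have hxy : x - y ∈ V (k + 2) ⊓ eigenspace (δ ∘ₗ σ) (lam 1 (k + 2)) := by
      refine Submodule.mem_inf.mpr ⟨Submodule.sub_mem _ hx (lamEigenSpan_le _ _ hy), ?_⟩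
      rw [mem_eigenspace_iff, lam_one_left, zero_smul, map_sub, hyx, LinearMap.comp_apply,
        sub_self]
    rw [← sub_add_cancel x y]
    exact Submodule.add_mem _
      (inf_eigenspace_le_lamEigenSpan _ (Finset.mem_Icc.mpr ⟨le_rfl, by omega⟩) hxy) hy

lemma eq_zero_of_mem_of_apply_eq_zero (hσ : ∀ k, ∀ x ∈ V k, σ x ∈ V (k - 1))
    (hσ1 : ∀ x ∈ V 1, σ x = 0) (k : ℕ) {x : M} (hx : x ∈ V (k + 1)) (hδx : δ x = 0) : x = 0 := by
  have hE : x ∈ eigenspace (δ ∘ₗ σ) (-((k + 1 : ℕ) : ℝ)) := by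
    rw [mem_eigenspace_iff, LinearMap.comp_apply, neg_smul, ← hcomm _ x hx, hδx, map_zero,
      zero_sub, neg_neg]
  exact (Submodule.disjoint_def.mp
    (disjoint_lamEigenSpan_eigenspace (δ ∘ₗ σ) (k + 1) (neg_neg_of_pos (by positivity))))
    x (le_lamEigenSpan hδ hcomm hσ hσ1 k hx) hE

end Grading

theorem stmt11_general {M : Type*} [AddCommGroup M] [Module ℝ M]
    (V : ℕ → Submodule ℝ M)
    (hindep : iSupIndep V)
    (δ σ : M →ₗ[ℝ] M)
    (hδ : ∀ k, ∀ x ∈ V k, δ x ∈ V (k + 1))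
    (hσ : ∀ k, ∀ x ∈ V k, σ x ∈ V (k - 1))
    (hcomm : ∀ k, ∀ x ∈ V k, σ (δ x) - δ (σ x) = (k : ℝ) • x)
    (hσ0 : ∀ x ∈ V 0, σ x = 0) (hσ1 : ∀ x ∈ V 1, σ x = 0) :
    (∀ x ∈ V 0, δ (σ x) = 0) ∧
    (∀ k : ℕ, 1 ≤ k →
      (V k = ⨆ m ∈ Finset.Icc 1 k,
          V k ⊓ Module.End.eigenspace (δ ∘ₗ σ) (lam m k)) ∧
      iSupIndep fun m : Finset.Icc 1 k =>
          V k ⊓ Module.End.eigenspace (δ ∘ₗ σ) (lam (m : ℕ) k)) ∧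
    (∀ x ∈ ⨆ k ∈ Set.Ici 1, V k, δ x = 0 → x = 0) := by
  refine ⟨fun x hx => by rw [hσ0 x hx, map_zero], fun k hk => ⟨?_, ?_⟩, fun x hx hδx => ?_⟩
  · obtain ⟨k, rfl⟩ := Nat.exists_eq_add_of_le' hk
    exact (le_lamEigenSpan hδ hcomm hσ hσ1 k).antisymm (lamEigenSpan_le _ _)
  · exact iSupIndep_inf_eigenspace_lam _ k
  · rw [show ⨆ k ∈ Set.Ici 1, V k = ⨆ k, V (k + 1) from iSup_ge_eq_iSup_nat_add V 1] at hx
    exact Submodule.eq_zero_of_mem_iSup_of_map_eq_zero (hindep.comp (add_left_injective 2))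
      (fun k => hδ (k + 1)) (fun k _ => eq_zero_of_mem_of_apply_eq_zero hδ hcomm hσ hσ1 k) hx hδx

/-- Structure theorem.  Let `V = ⊕_{k≥0} V^k` (an internal direct sum decomposition of a real
vector space) with linear maps `δ : V^k → V^{k+1}`, `σ : V^k → V^{k−1}` satisfying
`σδ − δσ = k·id` on `V^k` and `σ = 0` on `V^0` and `V^1`.  Then: `V^0` lies in the
`0`-eigenspace of `δ∘σ`; for each `k ≥ 1`, `V^k` decomposes as the direct sum
`⊕_{m=1}^k F_{λ_{m,k},k}`, where `F_{λ,k}` is the `λ`-eigenspace of `δ∘σ` on `V^k`;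
and `δ` is injective on `⊕_{k≥1} V^k`. -/
theorem stmt11 {M : Type*} [AddCommGroup M] [Module ℝ M]
    (V : ℕ → Submodule ℝ M)
    (hindep : iSupIndep V) (hsup : iSup V = ⊤)
    (δ σ : M →ₗ[ℝ] M)
    (hδ : ∀ k, ∀ x ∈ V k, δ x ∈ V (k + 1))
    (hσ : ∀ k, ∀ x ∈ V k, σ x ∈ V (k - 1))
    (hcomm : ∀ k, ∀ x ∈ V k, σ (δ x) - δ (σ x) = (k : ℝ) • x)
    (hσ0 : ∀ x ∈ V 0, σ x = 0) (hσ1 : ∀ x ∈ V 1, σ x = 0) :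
    (∀ x ∈ V 0, δ (σ x) = 0) ∧
    (∀ k : ℕ, 1 ≤ k →
      (V k = ⨆ m ∈ Finset.Icc 1 k,
          V k ⊓ Module.End.eigenspace (δ ∘ₗ σ) (lam m k)) ∧
      iSupIndep fun m : Finset.Icc 1 k =>
          V k ⊓ Module.End.eigenspace (δ ∘ₗ σ) (lam (m : ℕ) k)) ∧
    (∀ x ∈ ⨆ k ∈ Set.Ici 1, V k, δ x = 0 → x = 0) :=
  stmt11_general V hindep δ σ hδ hσ hcomm hσ0 hσ1
end

section
/- In the codimension-one deformation algebra 𝒟^∞W_1 (the free graded-commutative algebra on odd generators h_{(l)}, l ≥ 0, and even generators c_{(l)}, l ≥ 0, modulo the ideal 𝓘 generated by all δ̃^k(c_{(0)}²), k ≥ 0), every element of the form c_{(i)} c_{(j)} c_{(k)} with i + j + k ≤ 5 is zero. -/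
/-!
Pass to the quotient `D = ℝ[c_{(0)}, c_{(1)}, …] ⧸ 𝓘`. Since the summands of `δ̃^k(c_{(0)}²)` for
`i` and `k - i` agree, the first five generators of `𝓘` give, up to the factor `2`,
`c₀² = c₀c₁ = c₀c₂ + c₁² = c₀c₃ + 3c₁c₂ = c₀c₄ + 4c₁c₃ + 3c₂² = 0`.
Every cubic monomial of weight `≤ 5` containing `c₀²` or `c₀c₁` vanishes at once; the remaining
six, `c₁³, c₁²c₂, c₀c₂², c₁²c₃, c₀c₂c₃, c₁c₂²`, are eliminated in this order by multiplying the
relations with single generators, which only ever requires dividing by `2`, `3` or `5`.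
-/

open MvPolynomial

/-- The relation `δ̃^k(c_{(0)}²) = Σ_i C(k,i) c_{(i)} c_{(k−i)}` in the polynomial part
`ℝ[c_{(b)}]` of `𝒟^∞W̃_1`, with `c_{(l)}` modeled by the variable `X l`. -/
noncomputable def rel (k : ℕ) : MvPolynomial ℕ ℝ :=
  ∑ i ∈ Finset.range (k + 1), (k.choose i : ℝ) • (X i * X (k - i))

theorem eq_zero_of_natCast_mul_eq_zero {K A : Type*} [Field K] [CharZero K] [Ring A]
    [Algebra K A] {n : ℕ} (hn : n ≠ 0) {x : A} (h : (n : A) * x = 0) : x = 0 := by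
  rw [← nsmul_eq_mul, ← Nat.cast_smul_eq_nsmul K] at h
  exact (smul_eq_zero.mp h).resolve_left (Nat.cast_ne_zero.mpr hn)

theorem mul_mul_eq_zero_of_sorted {M : Type*} [CommMonoidWithZero M] (f : ℕ → M) (n : ℕ)
    (h : ∀ i j k, i ≤ j → j ≤ k → i + j + k ≤ n → f i * f j * f k = 0)
    (i j k : ℕ) (hn : i + j + k ≤ n) : f i * f j * f k = 0 := by
  rcases le_total i j with hij | hji <;> rcases le_total j k with hjk | hkj <;>
    rcases le_total i k with hik | hki
  all_goals first
    | exact h i j k ‹_› ‹_› (by omega)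
    | rw [mul_comm (f i)]; exact h j i k ‹_› ‹_› (by omega)
    | rw [mul_right_comm]; exact h i k j ‹_› ‹_› (by omega)
    | rw [mul_right_comm, mul_comm (f i)]; exact h k i j ‹_› ‹_› (by omega)
    | rw [mul_comm (f i), mul_right_comm]; exact h j k i ‹_› ‹_› (by omega)
    | rw [mul_comm (f i), mul_right_comm, mul_comm (f j)]; exact h k j i ‹_› ‹_› (by omega)

namespace DeformationAlgebra

abbrev D := MvPolynomial ℕ ℝ ⧸ Ideal.span (Set.range rel)

noncomputable def c (l : ℕ) : D := Ideal.Quotient.mk _ (X l)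

theorem sum_choose_mul_c_eq_zero (k : ℕ) :
    ∑ i ∈ Finset.range (k + 1), (k.choose i : D) * (c i * c (k - i)) = 0 := by
  have h := Ideal.Quotient.eq_zero_iff_mem.mpr (Ideal.subset_span (Set.mem_range_self (f := rel) k))
  simpa [rel, map_sum, Algebra.smul_def, c] using h

theorem c0_mul_c0 : c 0 * c 0 = 0 := by
  simpa using sum_choose_mul_c_eq_zero 0

theorem c0_mul_c1 : c 0 * c 1 = 0 := by
  have h := sum_choose_mul_c_eq_zero 1
  norm_num [Finset.sum_range_succ] at h
  exact eq_zero_of_natCast_mul_eq_zero (K := ℝ) (n := 2) two_ne_zero (by linear_combination h)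

theorem half_rel_two : c 0 * c 2 + c 1 * c 1 = 0 := by
  have h := sum_choose_mul_c_eq_zero 2
  norm_num [Finset.sum_range_succ] at h
  exact eq_zero_of_natCast_mul_eq_zero (K := ℝ) (n := 2) two_ne_zero (by linear_combination h)

theorem half_rel_three : c 0 * c 3 + 3 * (c 1 * c 2) = 0 := by
  have h := sum_choose_mul_c_eq_zero 3
  norm_num [Finset.sum_range_succ] at h
  exact eq_zero_of_natCast_mul_eq_zero (K := ℝ) (n := 2) two_ne_zero (by linear_combination h)

theorem half_rel_four : c 0 * c 4 + 4 * (c 1 * c 3) + 3 * (c 2 * c 2) = 0 := by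
  have h := sum_choose_mul_c_eq_zero 4
  norm_num [Finset.sum_range_succ, Nat.choose] at h
  exact eq_zero_of_natCast_mul_eq_zero (K := ℝ) (n := 2) two_ne_zero (by linear_combination h)

theorem c1_mul_c1_mul_c1 : c 1 * c 1 * c 1 = 0 := by
  linear_combination c 1 * half_rel_two - c 2 * c0_mul_c1

theorem c1_mul_c1_mul_c2 : c 1 * c 1 * c 2 = 0 :=
  eq_zero_of_natCast_mul_eq_zero (K := ℝ) (n := 3) three_ne_zero <| by
    linear_combination c 1 * half_rel_three - c 3 * c0_mul_c1

theorem c0_mul_c2_mul_c2 : c 0 * c 2 * c 2 = 0 := by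
  linear_combination c 2 * half_rel_two - c1_mul_c1_mul_c2

theorem c1_mul_c1_mul_c3 : c 1 * c 1 * c 3 = 0 :=
  eq_zero_of_natCast_mul_eq_zero (K := ℝ) (n := 5) (by norm_num) <| by
    linear_combination c 1 * half_rel_four - c 2 * half_rel_three + c 3 * half_rel_two -
      c 4 * c0_mul_c1

theorem c0_mul_c2_mul_c3 : c 0 * c 2 * c 3 = 0 := by
  linear_combination c 3 * half_rel_two - c1_mul_c1_mul_c3

theorem c1_mul_c2_mul_c2 : c 1 * c 2 * c 2 = 0 :=
  eq_zero_of_natCast_mul_eq_zero (K := ℝ) (n := 3) three_ne_zero <| by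
    linear_combination c 2 * half_rel_three - c0_mul_c2_mul_c3

theorem c_mul_c_mul_c_of_sorted (i j k : ℕ) (hij : i ≤ j) (hjk : j ≤ k) (h : i + j + k ≤ 5) :
    c i * c j * c k = 0 := by
  obtain ⟨rfl, rfl⟩ | ⟨rfl, rfl⟩ | ⟨rfl, rfl, rfl⟩ | ⟨rfl, rfl, rfl⟩ | ⟨rfl, rfl, rfl⟩ |
      ⟨rfl, rfl, rfl⟩ | ⟨rfl, rfl, rfl⟩ | ⟨rfl, rfl, rfl⟩ :
      i = 0 ∧ j = 0 ∨ i = 0 ∧ j = 1 ∨ i = 0 ∧ j = 2 ∧ k = 2 ∨ i = 0 ∧ j = 2 ∧ k = 3 ∨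
      i = 1 ∧ j = 1 ∧ k = 1 ∨ i = 1 ∧ j = 1 ∧ k = 2 ∨ i = 1 ∧ j = 1 ∧ k = 3 ∨
      i = 1 ∧ j = 2 ∧ k = 2 := by
    omega
  · rw [c0_mul_c0, zero_mul]
  · rw [c0_mul_c1, zero_mul]
  · exact c0_mul_c2_mul_c2
  · exact c0_mul_c2_mul_c3
  · exact c1_mul_c1_mul_c1
  · exact c1_mul_c1_mul_c2
  · exact c1_mul_c1_mul_c3
  · exact c1_mul_c2_mul_c2

end DeformationAlgebra

/-- In the codimension-one deformation algebra `𝒟^∞W_1` — the quotient by the ideal `𝓘`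
generated by all `δ̃^k(c_{(0)}²)`, `k ≥ 0` — every element of the form
`c_{(i)} c_{(j)} c_{(k)}` with `i + j + k ≤ 5` is zero, i.e. `c_{(i)} c_{(j)} c_{(k)}`
belongs to the ideal `𝓘`. -/
theorem stmt14 (i j k : ℕ) (h : i + j + k ≤ 5) :
    X i * X j * X k ∈ Ideal.span (Set.range rel) := by
  rw [← Ideal.Quotient.eq_zero_iff_mem, map_mul, map_mul]
  exact mul_mul_eq_zero_of_sorted DeformationAlgebra.c 5
    DeformationAlgebra.c_mul_c_mul_c_of_sorted i j k h
end
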